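/- Let h̄ be a nonnegative function in L^∞(ℝ^d × ℝ^d) with compact support, and let f, g be nonnegative compactly supported functions in L¹(ℝ^d) with equal total mass. Let h ∈ Γ(f,g)^h̄. Suppose that for almost every (x₀,y₀) ∈ ℝ^d × ℝ^d which is a common Lebesgue point of h and h̄, the constant function h(x₀,y₀) on Q minimizes the functional k ↦ ∫_Q x·y · k(x,y) dx dy among all nonnegative k ∈ L¹(Q) whose two marginals both equal the constant h(x₀,y₀) on [-1/2,1/2]^d and which satisfy k ≤ h̄(x₀,y₀) a.e. on Q. Then h is geometrically extreme: there exists a Lebesgue-measurable set W ⊆ ℝ^d × ℝ^d with h = h̄·1_W almost everywhere. -/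

import Mathlib

open MeasureTheory Filter Set Topology

noncomputable section

/-- The transportation cost `I_c(h) = ∫∫ c(x,y) h(x,y) dx dy` on `ℝ^d × ℝ^d`. -/
def Icost {d : ℕ} (c h : ((Fin d → ℝ) × (Fin d → ℝ)) → ℝ) : ℝ :=
  ∫ p, c p * h p

/-- `h ∈ Γ(f,g)`: `h` is a nonnegative integrable joint density on `ℝ^d × ℝ^d`
with marginals `f` and `g`. -/
def InGamma {d : ℕ} (f g : (Fin d → ℝ) → ℝ)
    (h : ((Fin d → ℝ) × (Fin d → ℝ)) → ℝ) : Prop :=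
  Integrable h volume ∧ (∀ᵐ p ∂volume, 0 ≤ h p) ∧
    (∀ᵐ x ∂volume, (∫ y, h (x, y)) = f x) ∧
    (∀ᵐ y ∂volume, (∫ x, h (x, y)) = g y)

/-- `h ∈ Γ(f,g)^h̄`: `h ∈ Γ(f,g)` and `h` is dominated by `h̄` a.e. -/
def InGammaBar {d : ℕ} (f g : (Fin d → ℝ) → ℝ)
    (hbar h : ((Fin d → ℝ) × (Fin d → ℝ)) → ℝ) : Prop :=
  InGamma f g h ∧ ∀ᵐ p ∂volume, h p ≤ hbar p

/-- The cube `[-1/2, 1/2]^d ⊆ ℝ^d`. -/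
def cube (d : ℕ) : Set (Fin d → ℝ) :=
  Set.Icc (fun _ => -(1/2 : ℝ)) (fun _ => (1/2 : ℝ))

/-- `z` is a Lebesgue point of `k`: the averages of `|k - k z|` over balls
`B_r(z)` tend to `0` as `r → 0⁺`. -/
def LebPoint {α : Type*} [MeasurableSpace α] [PseudoMetricSpace α]
    (μ : Measure α) (k : α → ℝ) (z : α) : Prop :=
  Tendsto (fun r : ℝ => ⨍ w in Metric.ball z r, |k w - k z| ∂μ)
    (nhdsWithin 0 (Set.Ioi 0)) (nhds 0)

/-!
At a common Lebesgue point `z` with `0 < h z < h̄ z`, the constant `c = h z` is not optimal in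
the blow-up problem. With `x₀, y₀` the first coordinates, `k(x,y) = c - ε x₀ y₀` has both
marginals equal to `c` (the cube is centred, so `∫ x₀ dx = 0`) and lies in `[0, h̄ z]` for
small `ε > 0`, while its cost is lower by `ε ∑ᵢ (∫ xᵢ x₀ dx)² ≥ ε (∫ x₀² dx)² > 0`.
Hence `h ∈ {0, h̄}` a.e., and `W = {h ≠ 0}`, for a measurable representative of `h`, works.
-/

theorem ae_lebPoint {E : Type*} [NormedAddCommGroup E] [NormedSpace ℝ E] [FiniteDimensional ℝ E]
    [MeasurableSpace E] [BorelSpace E] (μ : Measure E) [μ.IsAddHaarMeasure] {k : E → ℝ}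
    (hk : LocallyIntegrable k μ) : ∀ᵐ z ∂μ, LebPoint μ k z := by
  filter_upwards [IsUnifLocDoublingMeasure.ae_tendsto_average_norm_sub (μ := μ) hk 1] with z hz
  have hclosed : Tendsto (fun r => ⨍ w in Metric.closedBall z r, |k w - k z| ∂μ)
      (𝓝[>] 0) (𝓝 0) := by
    simpa only [Real.norm_eq_abs, id] using hz (fun _ => z) id tendsto_id <|
      eventually_mem_nhdsWithin.mono fun r hr =>
        Metric.mem_closedBall_self (mul_nonneg zero_le_one (le_of_lt hr))
  refine hclosed.congr' (eventually_mem_nhdsWithin.mono fun r hr => ?_)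
  have hball : Metric.closedBall z r =ᵐ[μ] Metric.ball z r := by
    refine ae_eq_set.2 ⟨?_, by simp [sdiff_eq_empty.2 Metric.ball_subset_closedBall]⟩
    rw [Metric.closedBall_sdiff_ball]
    exact Measure.addHaar_sphere_of_ne_zero μ z (ne_of_gt hr)
  rw [Measure.restrict_congr_set hball]

theorem exists_measurableSet_ae_eq_indicator {α β : Type*} [MeasurableSpace α] {μ : Measure α}
    [Zero β] [MeasurableSpace β] [MeasurableSingletonClass β] {f g : α → β}
    (hf : AEMeasurable f μ) (hfg : ∀ᵐ z ∂μ, f z = 0 ∨ f z = g z) :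
    ∃ W : Set α, MeasurableSet W ∧ f =ᵐ[μ] W.indicator g := by
  refine ⟨{z | hf.mk f z ≠ 0}, (measurableSet_singleton 0).compl.preimage hf.measurable_mk, ?_⟩
  filter_upwards [hfg, hf.ae_eq_mk] with z hz hmk
  by_cases hW : hf.mk f z ≠ 0
  · rw [indicator_of_mem hW]
    exact hz.resolve_left (hmk ▸ hW)
  · rw [indicator_of_notMem hW, hmk]
    exact not_not.1 hW

theorem integral_prod_sum_mul_mul_eq_sum_sq {X ι : Type*} [MeasurableSpace X] [Fintype ι]
    {μ : Measure X} [SFinite μ] {u : ι → X → ℝ} {φ : X → ℝ}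
    (hu : ∀ i, Integrable (fun x => u i x * φ x) μ) :
    ∫ p, (∑ i, u i p.1 * u i p.2) * (φ p.1 * φ p.2) ∂μ.prod μ
      = ∑ i, (∫ x, u i x * φ x ∂μ) ^ 2 := by
  have hsplit : ∀ p : X × X, (∑ i, u i p.1 * u i p.2) * (φ p.1 * φ p.2)
      = ∑ i, (u i p.1 * φ p.1) * (u i p.2 * φ p.2) := fun p => by
    rw [Finset.sum_mul]
    exact Finset.sum_congr rfl fun i _ => by ring
  simp_rw [hsplit]
  rw [integral_finsetSum _ fun i _ => (hu i).mul_prod (hu i)]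
  exact Finset.sum_congr rfl fun i _ => by
    rw [integral_prod_mul (fun x => u i x * φ x) (fun x => u i x * φ x), sq]

/-- `Γ(c, c)^b` on `Q`: the competitors in the blow-up problem at a point where `h = c` and
`h̄ = b`. -/
def IsBlowupCompetitor (d : ℕ) (c b : ℝ) (k : (Fin d → ℝ) × (Fin d → ℝ) → ℝ) : Prop :=
  IntegrableOn k (cube d ×ˢ cube d) volume ∧
    (∀ᵐ p ∂volume.restrict (cube d ×ˢ cube d), 0 ≤ k p) ∧
    (∀ᵐ x ∂volume.restrict (cube d), (∫ y in cube d, k (x, y)) = c) ∧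
    (∀ᵐ y ∂volume.restrict (cube d), (∫ x in cube d, k (x, y)) = c) ∧
    (∀ᵐ p ∂volume.restrict (cube d ×ˢ cube d), k p ≤ b)

def blowupCost (d : ℕ) (k : (Fin d → ℝ) × (Fin d → ℝ) → ℝ) : ℝ :=
  ∫ p in cube d ×ˢ cube d, (∑ i, p.1 i * p.2 i) * k p

instance isProbabilityMeasure_volume_restrict_Icc_half :
    IsProbabilityMeasure (volume.restrict (Icc (-(1/2) : ℝ) (1/2))) :=
  ⟨by norm_num [Real.volume_Icc]⟩

section Cube

variable {d : ℕ}

theorem volume_restrict_cube :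
    volume.restrict (cube d) = Measure.pi fun _ => volume.restrict (Icc (-(1/2) : ℝ) (1/2)) := by
  rw [cube, ← pi_univ_Icc, volume_pi, Measure.restrict_pi_pi]

instance isProbabilityMeasure_volume_restrict_cube :
    IsProbabilityMeasure (volume.restrict (cube d)) := by
  rw [volume_restrict_cube]
  infer_instance

theorem integral_cube_comp_eval (i : Fin d) {φ : ℝ → ℝ}
    (hφ : AEStronglyMeasurable φ (volume.restrict (Icc (-(1/2) : ℝ) (1/2)))) :
    ∫ x in cube d, φ (x i) = ∫ t in Icc (-(1/2) : ℝ) (1/2), φ t := by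
  rw [volume_restrict_cube]
  exact integral_comp_eval hφ

theorem integral_cube_eval (i : Fin d) : ∫ x in cube d, x i = 0 := by
  refine (integral_cube_comp_eval i aestronglyMeasurable_id).trans ?_
  rw [integral_Icc_eq_integral_Ioc, ← intervalIntegral.integral_of_le (by norm_num)]
  simp only [id, integral_id]
  norm_num

theorem integral_cube_eval_sq (i : Fin d) : ∫ x in cube d, x i ^ 2 = 1 / 12 := by
  rw [integral_cube_comp_eval i (continuous_pow 2).aestronglyMeasurable,
    integral_Icc_eq_integral_Ioc, ← intervalIntegral.integral_of_le (by norm_num), integral_pow]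
  norm_num

theorem isCompact_cube_prod_cube : IsCompact (cube d ×ˢ cube d) :=
  isCompact_Icc.prod isCompact_Icc

theorem integral_cube_const_sub_mul_eval (i : Fin d) (c a : ℝ) :
    ∫ y in cube d, (c - a * y i) = c := by
  have hint : IntegrableOn (fun y : Fin d → ℝ => a * y i) (cube d) :=
    Continuous.integrableOn_Icc (by fun_prop)
  rw [integral_sub (integrable_const c) hint, integral_const_mul, integral_cube_eval]
  simp

theorem isBlowupCompetitor_const_sub_mul_eval_mul_eval {c b ε : ℝ} (i : Fin d) (hε : 0 ≤ ε)
    (hεc : ε ≤ c) (hεb : c + ε ≤ b) :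
    IsBlowupCompetitor d c b fun p => c - ε * (p.1 i * p.2 i) := by
  have hbound : ∀ p ∈ cube d ×ˢ cube d, |ε * (p.1 i * p.2 i)| ≤ ε := fun p hp => by
    have hx : |p.1 i| ≤ 1 / 2 := abs_le.2 ⟨hp.1.1 i, hp.1.2 i⟩
    have hy : |p.2 i| ≤ 1 / 2 := abs_le.2 ⟨hp.2.1 i, hp.2.2 i⟩
    rw [abs_mul, abs_mul, abs_of_nonneg hε]
    exact mul_le_of_le_one_right hε (by nlinarith [abs_nonneg (p.1 i), abs_nonneg (p.2 i)])
  have hmeas : MeasurableSet (cube d ×ˢ cube d) := isCompact_cube_prod_cube.measurableSet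
  refine ⟨(Continuous.continuousOn (by fun_prop)).integrableOn_compact isCompact_cube_prod_cube,
    ae_restrict_of_forall_mem hmeas fun p hp => ?_, ae_of_all _ fun x => ?_,
    ae_of_all _ fun y => ?_, ae_restrict_of_forall_mem hmeas fun p hp => ?_⟩
  · linarith [(abs_le.1 (hbound p hp)).2]
  · simp_rw [← mul_assoc]
    exact integral_cube_const_sub_mul_eval i c (ε * x i)
  · simp_rw [mul_comm _ (y i), ← mul_assoc]
    exact integral_cube_const_sub_mul_eval i c (ε * y i)
  · linarith [(abs_le.1 (hbound p hp)).1]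

theorem blowupCost_const_sub_mul_eval_mul_eval (c ε : ℝ) (i : Fin d) :
    blowupCost d (fun p => c - ε * (p.1 i * p.2 i))
      = blowupCost d (fun _ => c) - ε * ∑ j, (∫ x in cube d, x j * x i) ^ 2 := by
  have hint : ∀ k : (Fin d → ℝ) × (Fin d → ℝ) → ℝ, Continuous k →
      IntegrableOn k (cube d ×ˢ cube d) :=
    fun k hk => hk.continuousOn.integrableOn_compact isCompact_cube_prod_cube
  simp_rw [blowupCost, mul_sub]
  rw [integral_sub (hint _ (by fun_prop)) (hint _ (by fun_prop))]
  simp_rw [mul_left_comm _ ε]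
  rw [integral_const_mul, Measure.volume_eq_prod, ← Measure.prod_restrict,
    integral_prod_sum_mul_mul_eq_sum_sq (μ := volume.restrict (cube d)) (u := fun j x => x j)
      (φ := fun x => x i) fun j => Continuous.integrableOn_Icc (by fun_prop)]

theorem exists_isBlowupCompetitor_blowupCost_lt (hd : 0 < d) {c b : ℝ} (hc : 0 < c)
    (hcb : c < b) :
    ∃ k, IsBlowupCompetitor d c b k ∧ blowupCost d k < blowupCost d fun _ => c := by
  set i : Fin d := ⟨0, hd⟩
  set ε := min c (b - c)
  have hε : 0 < ε := lt_min hc (sub_pos.2 hcb)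
  have hsum : 0 < ∑ j, (∫ x in cube d, x j * x i) ^ 2 :=
    calc (0 : ℝ) < (∫ x in cube d, x i * x i) ^ 2 := by
          simp_rw [← sq, integral_cube_eval_sq]
          norm_num
      _ ≤ ∑ j, (∫ x in cube d, x j * x i) ^ 2 :=
        Finset.single_le_sum (f := fun j => (∫ x in cube d, x j * x i) ^ 2)
          (fun j _ => sq_nonneg _) (Finset.mem_univ i)
  refine ⟨_, isBlowupCompetitor_const_sub_mul_eval_mul_eval i hε.le (min_le_left _ _)
    (by linarith [min_le_right c (b - c)]), ?_⟩
  rw [blowupCost_const_sub_mul_eval_mul_eval]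
  linarith [mul_pos hε hsum]

theorem eq_zero_or_eq_of_forall_blowupCost_le (hd : 0 < d) {c b : ℝ} (hc : 0 ≤ c)
    (hcb : c ≤ b)
    (hmin : ∀ k, IsBlowupCompetitor d c b k → blowupCost d (fun _ => c) ≤ blowupCost d k) :
    c = 0 ∨ c = b := by
  by_contra! hne
  obtain ⟨k, hk, hlt⟩ :=
    exists_isBlowupCompetitor_blowupCost_lt hd (hc.lt_of_ne' hne.1) (hcb.lt_of_ne hne.2)
  exact (hmin k hk).not_gt hlt

end Cube

theorem blowup_optimality_implies_geometrically_extreme_general (d : ℕ) (hd : 0 < d)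
    (hbar : ((Fin d → ℝ) × (Fin d → ℝ)) → ℝ)
    (hbar_meas : Measurable hbar)
    (hbar_bdd : ∃ M, ∀ᵐ p ∂volume, hbar p ≤ M)
    (f g : (Fin d → ℝ) → ℝ)
    (h : ((Fin d → ℝ) × (Fin d → ℝ)) → ℝ)
    (hmem : InGammaBar f g hbar h)
    (hopt : ∀ᵐ z ∂volume, (LebPoint volume h z ∧ LebPoint volume hbar z) →
      ∀ k : ((Fin d → ℝ) × (Fin d → ℝ)) → ℝ,
        IntegrableOn k (cube d ×ˢ cube d) volume →
        (∀ᵐ p ∂volume.restrict (cube d ×ˢ cube d), 0 ≤ k p) →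
        (∀ᵐ x ∂volume.restrict (cube d), (∫ y in cube d, k (x, y)) = h z) →
        (∀ᵐ y ∂volume.restrict (cube d), (∫ x in cube d, k (x, y)) = h z) →
        (∀ᵐ p ∂volume.restrict (cube d ×ˢ cube d), k p ≤ hbar z) →
        (∫ p in cube d ×ˢ cube d, (∑ i, p.1 i * p.2 i) * h z) ≤
          ∫ p in cube d ×ˢ cube d, (∑ i, p.1 i * p.2 i) * k p) :
    ∃ W : Set ((Fin d → ℝ) × (Fin d → ℝ)), MeasurableSet W ∧
      h =ᵐ[volume] W.indicator hbar := by
  obtain ⟨⟨h_int, h_nonneg, -, -⟩, h_le⟩ := hmem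
  obtain ⟨M, hM⟩ := hbar_bdd
  have : (volume : Measure ((Fin d → ℝ) × (Fin d → ℝ))).IsAddHaarMeasure := by
    rw [Measure.volume_eq_prod]
    exact Measure.prod.instIsAddHaarMeasure volume volume
  have hbar_loc : LocallyIntegrable hbar volume :=
    (locallyIntegrable_const M).mono hbar_meas.aestronglyMeasurable <| by
      filter_upwards [hM, h_nonneg, h_le] with p hpM hp0 hpb
      rw [Real.norm_of_nonneg (hp0.trans hpb)]
      exact hpM.trans (le_abs_self M)
  have h_extreme : ∀ᵐ z ∂volume, h z = 0 ∨ h z = hbar z := by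
    filter_upwards [ae_lebPoint volume h_int.locallyIntegrable, ae_lebPoint volume hbar_loc,
      hopt, h_nonneg, h_le] with z hz hbz hopt_z h0 hle
    exact eq_zero_or_eq_of_forall_blowupCost_le hd h0 hle fun k ⟨hk_int, hk0, hkx, hky, hkb⟩ =>
      hopt_z ⟨hz, hbz⟩ k hk_int hk0 hkx hky hkb
  exact exists_measurableSet_ae_eq_indicator h_int.aemeasurable h_extreme

/-- **A necessary condition for optimality of the blow-ups implies geometric extremality**
(Corollary 6.3): if `h ∈ Γ(f,g)^h̄` and, at almost every common Lebesgue point `z` of `h` and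
`h̄`, the constant `h z` minimizes `k ↦ ∫_Q x·y k(x,y) dx dy` among nonnegative `k ∈ L¹(Q)`
with constant marginals `h z` and `k ≤ h̄ z` a.e. on `Q`, then `h` is geometrically extreme:
`h = h̄·1_W` a.e. for some measurable `W`. -/
theorem blowup_optimality_implies_geometrically_extreme (d : ℕ) (hd : 0 < d)
    (hbar : ((Fin d → ℝ) × (Fin d → ℝ)) → ℝ)
    (hbar_meas : Measurable hbar) (hbar_nonneg : ∀ p, 0 ≤ hbar p)
    (hbar_bdd : ∃ M, ∀ᵐ p ∂volume, hbar p ≤ M)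
    (hbar_supp : HasCompactSupport hbar)
    (f g : (Fin d → ℝ) → ℝ)
    (hf_int : Integrable f volume) (hg_int : Integrable g volume)
    (hf_nonneg : ∀ x, 0 ≤ f x) (hg_nonneg : ∀ y, 0 ≤ g y)
    (hf_supp : HasCompactSupport f) (hg_supp : HasCompactSupport g)
    (hmass : ∫ x, f x = ∫ y, g y)
    (h : ((Fin d → ℝ) × (Fin d → ℝ)) → ℝ)
    (hmem : InGammaBar f g hbar h)
    (hopt : ∀ᵐ z ∂volume, (LebPoint volume h z ∧ LebPoint volume hbar z) →
      ∀ k : ((Fin d → ℝ) × (Fin d → ℝ)) → ℝ,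
        IntegrableOn k (cube d ×ˢ cube d) volume →
        (∀ᵐ p ∂volume.restrict (cube d ×ˢ cube d), 0 ≤ k p) →
        (∀ᵐ x ∂volume.restrict (cube d), (∫ y in cube d, k (x, y)) = h z) →
        (∀ᵐ y ∂volume.restrict (cube d), (∫ x in cube d, k (x, y)) = h z) →
        (∀ᵐ p ∂volume.restrict (cube d ×ˢ cube d), k p ≤ hbar z) →
        (∫ p in cube d ×ˢ cube d, (∑ i, p.1 i * p.2 i) * h z) ≤
          ∫ p in cube d ×ˢ cube d, (∑ i, p.1 i * p.2 i) * k p) :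
    ∃ W : Set ((Fin d → ℝ) × (Fin d → ℝ)), MeasurableSet W ∧
      h =ᵐ[volume] W.indicator hbar :=
  blowup_optimality_implies_geometrically_extreme_general d hd hbar hbar_meas hbar_bdd f g h hmem
    hopt
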